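/- The set of global minimizers of L(u) = c̃ g(u) − η̃ h(u)² − E_t[φ_t(g(u))] over u ∈ ℝᵈ is exactly Θ* = {± √(1 + σ²/‖Ae‖²) e} + ker(A). -/

import Mathlib

/-!
Write `v = σ_t²`, `β = ‖Ae‖²`, `x = g(u) = ‖Au‖²` and `y = h(u)² = ⟨Ae, Au⟩²`. For every `v > 0`
the integrand of `L`, minus its value at `x* = β + σ²`, `y* = β x*`, equals
`(x - x*)² / ((v + σ² + β)² (v + x)) + (β x - y) η_v` with `η_v > 0`. Since `y ≤ β x` by
Cauchy–Schwarz, `L` is minimal exactly when `‖Au‖² = x*` and Cauchy–Schwarz is an equality, that is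
when `Au = ± √(1 + σ²/β) Ae`.
-/

open Matrix MeasureTheory Set

-- The integrand of `L` at `v = σ_t²`, as a function of `x = g(u)` and `y = h(u)²`.
noncomputable def pointLoss (σ β v x y : ℝ) : ℝ :=
  x / (v + σ ^ 2) ^ 2 - (2 * (v + σ ^ 2) + β) / ((v + σ ^ 2) ^ 2 * (v + σ ^ 2 + β) ^ 2) * y
    - x / (v * (v + x))

section pointLoss

variable {σ β v x y : ℝ}

theorem pointLoss_sub_pointLoss_opt (hv : 0 < v) (hβ : 0 ≤ β) (hx : 0 ≤ x) :
    pointLoss σ β v x y - pointLoss σ β v (β + σ ^ 2) (β * (β + σ ^ 2)) =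
      (x - (β + σ ^ 2)) ^ 2 / ((v + σ ^ 2 + β) ^ 2 * (v + x)) +
        (β * x - y) * ((2 * (v + σ ^ 2) + β) / ((v + σ ^ 2) ^ 2 * (v + σ ^ 2 + β) ^ 2)) := by
  have h1 : v + σ ^ 2 ≠ 0 := by positivity
  have h2 : v + σ ^ 2 + β ≠ 0 := by positivity
  have h3 : v + x ≠ 0 := by positivity
  have h4 : v + (β + σ ^ 2) ≠ 0 := by positivity
  unfold pointLoss
  field_simp
  ring

theorem pointLoss_opt_le (hv : 0 < v) (hβ : 0 ≤ β) (hx : 0 ≤ x) (hy : y ≤ β * x) :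
    pointLoss σ β v (β + σ ^ 2) (β * (β + σ ^ 2)) ≤ pointLoss σ β v x y := by
  rw [← sub_nonneg, pointLoss_sub_pointLoss_opt hv hβ hx]
  have : 0 ≤ β * x - y := sub_nonneg.mpr hy
  positivity

theorem pointLoss_opt_lt (hv : 0 < v) (hβ : 0 ≤ β) (hx : 0 ≤ x) (hy : y ≤ β * x)
    (hne : x ≠ β + σ ^ 2 ∨ y ≠ β * x) :
    pointLoss σ β v (β + σ ^ 2) (β * (β + σ ^ 2)) < pointLoss σ β v x y := by
  rw [← sub_pos, pointLoss_sub_pointLoss_opt hv hβ hx]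
  have : 0 ≤ β * x - y := sub_nonneg.mpr hy
  rcases hne with hne | hne
  · have := sub_ne_zero.mpr hne
    positivity
  · have := sub_pos.mpr (hy.lt_of_ne hne)
    positivity

end pointLoss

theorem intervalIntegrable_comp_of_continuousOn {G f : ℝ → ℝ} {K : Set ℝ} {a b : ℝ}
    (hK : IsCompact K) (hG : ContinuousOn G K) (hGm : Measurable G) (hf : Measurable f)
    (hfK : ∀ t ∈ uIcc a b, f t ∈ K) :
    IntervalIntegrable (fun t => G (f t)) volume a b := by
  obtain ⟨C, hC⟩ := hK.exists_bound_of_continuousOn hG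
  refine (intervalIntegrable_const (c := C)).mono_fun' (hGm.comp hf).aestronglyMeasurable ?_
  rw [Filter.EventuallyLE, ae_restrict_iff' measurableSet_uIoc]
  exact ae_of_all _ fun t ht => hC _ (hfK t (uIoc_subset_uIcc ht))

section schedule

variable {v : ℝ → ℝ} {v₀ v₁ σ β : ℝ}

theorem intervalIntegrable_comp_schedule (hvm : Measurable v) (hv₀ : 0 < v₀)
    (hv : ∀ t ∈ Icc (0 : ℝ) 1, v t ∈ Icc v₀ v₁) {G : ℝ → ℝ} (hG : ContinuousOn G (Ioi 0))
    (hGm : Measurable G) : IntervalIntegrable (fun t => G (v t)) volume 0 1 :=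
  intervalIntegrable_comp_of_continuousOn isCompact_Icc
    (hG.mono fun _ hw => hv₀.trans_le hw.1) hGm hvm
    (fun t ht => hv t (by rwa [uIcc_of_le zero_le_one] at ht))

theorem intervalIntegral_pointLoss_eq (hvm : Measurable v) (hv₀ : 0 < v₀)
    (hv : ∀ t ∈ Icc (0 : ℝ) 1, v t ∈ Icc v₀ v₁) (hβ : 0 ≤ β) {x : ℝ} (hx : 0 ≤ x) (y : ℝ) :
    (∫ t in (0 : ℝ)..1, ((v t + σ ^ 2) ^ 2)⁻¹) * x -
        (∫ t in (0 : ℝ)..1,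
          (2 * (v t + σ ^ 2) + β) / ((v t + σ ^ 2) ^ 2 * (v t + σ ^ 2 + β) ^ 2)) * y -
        ∫ t in (0 : ℝ)..1, x / (v t * (v t + x)) =
      ∫ t in (0 : ℝ)..1, pointLoss σ β (v t) x y := by
  have hc : IntervalIntegrable (fun t => ((v t + σ ^ 2) ^ 2)⁻¹) volume 0 1 :=
    intervalIntegrable_comp_schedule hvm hv₀ hv (G := fun w => ((w + σ ^ 2) ^ 2)⁻¹)
      (fun w (hw : 0 < w) => by fun_prop (disch := positivity)) (by fun_prop)
  have hη : IntervalIntegrable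
      (fun t => (2 * (v t + σ ^ 2) + β) / ((v t + σ ^ 2) ^ 2 * (v t + σ ^ 2 + β) ^ 2))
      volume 0 1 :=
    intervalIntegrable_comp_schedule hvm hv₀ hv
      (G := fun w => (2 * (w + σ ^ 2) + β) / ((w + σ ^ 2) ^ 2 * (w + σ ^ 2 + β) ^ 2))
      (fun w (hw : 0 < w) => by fun_prop (disch := positivity)) (by fun_prop)
  have hφ : IntervalIntegrable (fun t => x / (v t * (v t + x))) volume 0 1 :=
    intervalIntegrable_comp_schedule hvm hv₀ hv (G := fun w => x / (w * (w + x)))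
      (fun w (hw : 0 < w) => by fun_prop (disch := positivity)) (by fun_prop)
  rw [← intervalIntegral.integral_mul_const, ← intervalIntegral.integral_mul_const,
    ← intervalIntegral.integral_sub (hc.mul_const x) (hη.mul_const y),
    ← intervalIntegral.integral_sub ((hc.mul_const x).sub (hη.mul_const y)) hφ]
  congr 1 with t
  rw [pointLoss]
  ring

theorem intervalIntegrable_pointLoss (hvm : Measurable v) (hv₀ : 0 < v₀)
    (hv : ∀ t ∈ Icc (0 : ℝ) 1, v t ∈ Icc v₀ v₁) (hβ : 0 ≤ β) {x : ℝ} (hx : 0 ≤ x) (y : ℝ) :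
    IntervalIntegrable (fun t => pointLoss σ β (v t) x y) volume 0 1 :=
  intervalIntegrable_comp_schedule hvm hv₀ hv (G := fun w => pointLoss σ β w x y)
    (fun w (hw : 0 < w) => by unfold pointLoss; fun_prop (disch := positivity))
    (by unfold pointLoss; fun_prop)

theorem intervalIntegral_pointLoss_opt_le (hvm : Measurable v) (hv₀ : 0 < v₀)
    (hv : ∀ t ∈ Icc (0 : ℝ) 1, v t ∈ Icc v₀ v₁) (hβ : 0 ≤ β) {x y : ℝ} (hx : 0 ≤ x)
    (hy : y ≤ β * x) :
    ∫ t in (0 : ℝ)..1, pointLoss σ β (v t) (β + σ ^ 2) (β * (β + σ ^ 2)) ≤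
      ∫ t in (0 : ℝ)..1, pointLoss σ β (v t) x y :=
  intervalIntegral.integral_mono_on zero_le_one
    (intervalIntegrable_pointLoss hvm hv₀ hv hβ (by positivity) _)
    (intervalIntegrable_pointLoss hvm hv₀ hv hβ hx y)
    fun t ht => pointLoss_opt_le (hv₀.trans_le (hv t ht).1) hβ hx hy

theorem intervalIntegral_pointLoss_eq_opt_iff (hvm : Measurable v) (hv₀ : 0 < v₀)
    (hv : ∀ t ∈ Icc (0 : ℝ) 1, v t ∈ Icc v₀ v₁) (hβ : 0 ≤ β) {x y : ℝ} (hx : 0 ≤ x)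
    (hy : y ≤ β * x) :
    ∫ t in (0 : ℝ)..1, pointLoss σ β (v t) x y =
        ∫ t in (0 : ℝ)..1, pointLoss σ β (v t) (β + σ ^ 2) (β * (β + σ ^ 2)) ↔
      x = β + σ ^ 2 ∧ y = β * x := by
  refine ⟨fun h => ?_, fun ⟨hx', hy'⟩ => by rw [hy', hx']⟩
  by_contra hne
  have hI := intervalIntegrable_pointLoss (σ := σ) hvm hv₀ hv hβ hx y
  have hI' := intervalIntegrable_pointLoss (σ := σ) hvm hv₀ hv hβ
    (x := β + σ ^ 2) (by positivity) (β * (β + σ ^ 2))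
  have hpos := intervalIntegral.intervalIntegral_pos_of_pos_on (hI.sub hI')
    (fun t ht => sub_pos.2 <| pointLoss_opt_lt (hv₀.trans_le (hv t (Ioo_subset_Icc_self ht)).1)
      hβ hx hy (not_and_or.1 hne)) zero_lt_one
  rw [intervalIntegral.integral_sub hI hI', h, sub_self] at hpos
  exact hpos.false

end schedule

section dotProduct

variable {ι : Type*} [Fintype ι] {a b : ι → ℝ}

theorem dotProduct_self_nonneg (a : ι → ℝ) : 0 ≤ a ⬝ᵥ a :=
  Finset.sum_nonneg fun i _ => mul_self_nonneg (a i)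

theorem dotProduct_self_pos (ha : a ≠ 0) : 0 < a ⬝ᵥ a :=
  (dotProduct_self_nonneg a).lt_of_ne' (dotProduct_self_eq_zero.not.2 ha)

theorem sq_dotProduct_le (a b : ι → ℝ) : (b ⬝ᵥ a) ^ 2 ≤ (b ⬝ᵥ b) * (a ⬝ᵥ a) := by
  simpa only [dotProduct, sq] using Finset.sum_mul_sq_le_sq_mul_sq Finset.univ b a

theorem eq_smul_of_sq_dotProduct_eq (hb : b ≠ 0) (h : (b ⬝ᵥ a) ^ 2 = (b ⬝ᵥ b) * (a ⬝ᵥ a)) :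
    a = ((b ⬝ᵥ a) / (b ⬝ᵥ b)) • b := by
  -- Lagrange's identity: the squared length of `(b ⬝ᵥ b) • a - (b ⬝ᵥ a) • b` is
  -- `(b ⬝ᵥ b) * ((b ⬝ᵥ b) * (a ⬝ᵥ a) - (b ⬝ᵥ a) ^ 2)`.
  have h0 : ((b ⬝ᵥ b) • a - (b ⬝ᵥ a) • b) ⬝ᵥ ((b ⬝ᵥ b) • a - (b ⬝ᵥ a) • b) = 0 := by
    simp only [dotProduct_sub, sub_dotProduct, dotProduct_smul, smul_dotProduct, smul_eq_mul,
      dotProduct_comm a b]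
    linear_combination (-(b ⬝ᵥ b)) * h
  rw [dotProduct_self_eq_zero, sub_eq_zero] at h0
  rw [div_eq_inv_mul, mul_smul, ← h0, smul_smul, inv_mul_cancel₀ (dotProduct_self_pos hb).ne',
    one_smul]

theorem dotProduct_self_eq_and_sq_dotProduct_eq_iff (hb : b ≠ 0) (ρ : ℝ) :
    a ⬝ᵥ a = ρ ^ 2 * (b ⬝ᵥ b) ∧ (b ⬝ᵥ a) ^ 2 = (b ⬝ᵥ b) * (a ⬝ᵥ a) ↔
      a = ρ • b ∨ a = -ρ • b := by
  constructor
  · rintro ⟨hnorm, hcs⟩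
    obtain ⟨c, rfl⟩ : ∃ c : ℝ, a = c • b := ⟨_, eq_smul_of_sq_dotProduct_eq hb hcs⟩
    simp only [smul_dotProduct, dotProduct_smul, smul_eq_mul] at hnorm
    have hc : c ^ 2 = ρ ^ 2 :=
      mul_right_cancel₀ (dotProduct_self_pos hb).ne' (by linear_combination hnorm)
    rcases sq_eq_sq_iff_eq_or_eq_neg.1 hc with rfl | rfl
    exacts [Or.inl rfl, Or.inr rfl]
  · rintro (rfl | rfl) <;>
      simp only [smul_dotProduct, dotProduct_smul, smul_eq_mul] <;> constructor <;> ring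

end dotProduct

theorem dotProduct_transpose_mul_mulVec {m n R : Type*} [Fintype m] [Fintype n] [CommSemiring R]
    (A : Matrix m n R) (w u : n → R) : w ⬝ᵥ (Aᵀ * A) *ᵥ u = (A *ᵥ w) ⬝ᵥ (A *ᵥ u) := by
  rw [← mulVec_mulVec, dotProduct_mulVec, vecMul_transpose]

theorem exists_mulVec_eq_zero_and_eq_add_or_eq_sub_iff {m n R : Type*} [Fintype n] [CommRing R]
    (A : Matrix m n R) (u e : n → R) (ρ : R) :
    (∃ q, A *ᵥ q = 0 ∧ (u = q + ρ • e ∨ u = q - ρ • e)) ↔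
      A *ᵥ u = ρ • A *ᵥ e ∨ A *ᵥ u = -ρ • A *ᵥ e := by
  constructor
  · rintro ⟨q, hq, rfl | rfl⟩
    · simp [mulVec_add, mulVec_smul, hq]
    · simp [mulVec_sub, mulVec_smul, hq]
  · rintro (h | h)
    · exact ⟨u - ρ • e, by simp [mulVec_sub, mulVec_smul, h], Or.inl (by abel)⟩
    · exact ⟨u + ρ • e, by simp [mulVec_add, mulVec_smul, h], Or.inr (by abel)⟩

theorem stmt_15_general {m d : ℕ} (A : Matrix (Fin m) (Fin d) ℝ)
    (e : Fin d → ℝ) (hAe : A.mulVec e ≠ 0)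
    (σ σmin σmax : ℝ) (hσmin : 0 < σmin)
    (σt : ℝ → ℝ) (hmeas : Measurable σt)
    (hbound : ∀ t ∈ Set.Icc (0 : ℝ) 1, σmin ≤ σt t ∧ σt t ≤ σmax)
    (g h : (Fin d → ℝ) → ℝ) (φ : ℝ → ℝ → ℝ) (ctil ηtil : ℝ) (L : (Fin d → ℝ) → ℝ)
    (hg : g = fun u => u ⬝ᵥ (Aᵀ * A).mulVec u)
    (hh : h = fun u => e ⬝ᵥ (Aᵀ * A).mulVec u)
    (hφ : φ = fun t x => x / (σt t ^ 2 * (σt t ^ 2 + x)))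
    (hctil : ctil = ∫ t in (0 : ℝ)..1, ((σt t ^ 2 + σ ^ 2) ^ 2)⁻¹)
    (hηtil : ηtil = ∫ t in (0 : ℝ)..1,
        (2 * (σt t ^ 2 + σ ^ 2) + (A.mulVec e) ⬝ᵥ (A.mulVec e)) /
          ((σt t ^ 2 + σ ^ 2) ^ 2 *
            (σt t ^ 2 + σ ^ 2 + (A.mulVec e) ⬝ᵥ (A.mulVec e)) ^ 2))
    (hL : L = fun u => ctil * g u - ηtil * (h u) ^ 2 - ∫ t in (0 : ℝ)..1, φ t (g u)) :
    {u : Fin d → ℝ | ∀ v : Fin d → ℝ, L u ≤ L v} =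
      {u : Fin d → ℝ | ∃ q : Fin d → ℝ, A.mulVec q = 0 ∧
        (u = q + Real.sqrt (1 + σ ^ 2 / ((A.mulVec e) ⬝ᵥ (A.mulVec e))) • e ∨
         u = q - Real.sqrt (1 + σ ^ 2 / ((A.mulVec e) ⬝ᵥ (A.mulVec e))) • e)} := by
  set b := A *ᵥ e
  set β := b ⬝ᵥ b
  set r := √(1 + σ ^ 2 / β)
  have hβ : 0 < β := dotProduct_self_pos hAe
  have hr : r ^ 2 * β = β + σ ^ 2 := by
    rw [Real.sq_sqrt (by positivity)]
    field_simp
  have hv : ∀ t ∈ Icc (0 : ℝ) 1, σt t ^ 2 ∈ Icc (σmin ^ 2) (σmax ^ 2) := fun t ht =>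
    ⟨pow_le_pow_left₀ hσmin.le (hbound t ht).1 2,
      pow_le_pow_left₀ (hσmin.le.trans (hbound t ht).1) (hbound t ht).2 2⟩
  have hvm : Measurable fun t => σt t ^ 2 := hmeas.pow_const 2
  have hL' : ∀ u, L u = ∫ t in (0 : ℝ)..1,
      pointLoss σ β (σt t ^ 2) ((A *ᵥ u) ⬝ᵥ (A *ᵥ u)) ((b ⬝ᵥ A *ᵥ u) ^ 2) := fun u => by
    subst hL hg hh hφ hctil hηtil
    simp only [dotProduct_transpose_mul_mulVec]
    exact intervalIntegral_pointLoss_eq (v := fun t => σt t ^ 2) hvm (pow_pos hσmin 2) hv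
      hβ.le (dotProduct_self_nonneg _) _
  set J := ∫ t in (0 : ℝ)..1, pointLoss σ β (σt t ^ 2) (β + σ ^ 2) (β * (β + σ ^ 2)) with hJ
  have hmin : ∀ u, J ≤ L u := fun u => by
    rw [hL']
    exact intervalIntegral_pointLoss_opt_le hvm (pow_pos hσmin 2) hv hβ.le
      (dotProduct_self_nonneg _) (sq_dotProduct_le _ _)
  have hopt : ∀ u, L u = J ↔ A *ᵥ u = r • b ∨ A *ᵥ u = -r • b := fun u => by
    rw [hL', hJ, intervalIntegral_pointLoss_eq_opt_iff hvm (pow_pos hσmin 2) hv hβ.le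
      (dotProduct_self_nonneg _) (sq_dotProduct_le _ _), ← hr,
      ← dotProduct_self_eq_and_sq_dotProduct_eq_iff hAe]
  ext u
  rw [mem_ofPred_eq, mem_ofPred_eq, exists_mulVec_eq_zero_and_eq_add_or_eq_sub_iff, ← hopt]
  refine ⟨fun hu => le_antisymm ((hu (r • e)).trans_eq ((hopt _).2 (Or.inl ?_))) (hmin u),
    fun hu v => hu ▸ hmin v⟩
  exact mulVec_smul A r e

/-- The set of global minimizers of
`L(u) = c̃ g(u) − η̃ h(u)² − E_t[φ_t(g(u))]` over `u ∈ ℝᵈ` is exactly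
`Θ* = {± √(1 + σ²/‖Ae‖²) e} + ker(A)`. -/
theorem stmt_15 {m d : ℕ} (A : Matrix (Fin m) (Fin d) ℝ) (hrank : A.rank = m)
    (e : Fin d → ℝ) (he : e ⬝ᵥ e = 1) (hAe : A.mulVec e ≠ 0)
    (σ σmin σmax : ℝ) (hσ : 0 < σ) (hσmin : 0 < σmin)
    (σt : ℝ → ℝ) (hmeas : Measurable σt)
    (hbound : ∀ t ∈ Set.Icc (0 : ℝ) 1, σmin ≤ σt t ∧ σt t ≤ σmax)
    (g h : (Fin d → ℝ) → ℝ) (φ : ℝ → ℝ → ℝ) (ctil ηtil : ℝ) (L : (Fin d → ℝ) → ℝ)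
    (hg : g = fun u => u ⬝ᵥ (Aᵀ * A).mulVec u)
    (hh : h = fun u => e ⬝ᵥ (Aᵀ * A).mulVec u)
    (hφ : φ = fun t x => x / (σt t ^ 2 * (σt t ^ 2 + x)))
    (hctil : ctil = ∫ t in (0 : ℝ)..1, ((σt t ^ 2 + σ ^ 2) ^ 2)⁻¹)
    (hηtil : ηtil = ∫ t in (0 : ℝ)..1,
        (2 * (σt t ^ 2 + σ ^ 2) + (A.mulVec e) ⬝ᵥ (A.mulVec e)) /
          ((σt t ^ 2 + σ ^ 2) ^ 2 *
            (σt t ^ 2 + σ ^ 2 + (A.mulVec e) ⬝ᵥ (A.mulVec e)) ^ 2))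
    (hL : L = fun u => ctil * g u - ηtil * (h u) ^ 2 - ∫ t in (0 : ℝ)..1, φ t (g u)) :
    {u : Fin d → ℝ | ∀ v : Fin d → ℝ, L u ≤ L v} =
      {u : Fin d → ℝ | ∃ q : Fin d → ℝ, A.mulVec q = 0 ∧
        (u = q + Real.sqrt (1 + σ ^ 2 / ((A.mulVec e) ⬝ᵥ (A.mulVec e))) • e ∨
         u = q - Real.sqrt (1 + σ ^ 2 / ((A.mulVec e) ⬝ᵥ (A.mulVec e))) • e)} :=
  stmt_15_general A e hAe σ σmin σmax hσmin σt hmeas hbound g h φ ctil ηtil L hg hh hφ hctil hηtil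
    hL
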